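/- Emptiness for parametric Büchi: for a finite Markov chain M = (S,P,s₀,L) and a ∈ AP, V_{>0}(□◇_{≤x} a) ≠ ∅ if and only if there exists a bottom strongly connected component B of M that is reachable from s₀ in the digraph of M and satisfies n_{a,B} < ∞ (equivalently, every directed cycle inside B contains an a-state). -/

import Mathlib

/-!
If a reachable BSCC `B` has `n_{a,B} = N < ∞` and a positive-probability prefix of length `k`
enters `B`, then almost every path extending that prefix stays in `B` and meets `a` at least
every `N + 1` steps, so `□◇_{≤k+N+1} a` has positive probability.

Conversely, if every reachable BSCC contains arbitrarily long `a`-free paths, then from every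
reachable state a path of positive weight leads into a run of `n + 1` non-`a` states. Recording
the length of the current non-`a` run turns `□◇_{≤n} a` into survival of a killed chain; as it
is killed with probability at least `w > 0` within every `r` steps, it survives `k r` steps with
probability at most `(1 - w) ^ k`, so `□◇_{≤n} a` is a null event.

The cylinders need not be measurable (`S` carries an arbitrary σ-algebra), so only monotonicity
and subadditivity of `μ` are used.
-/

open MeasureTheory
open scoped ENNReal

namespace Relation

variable {α : Type*} {r : α → α → Prop} {x y : α}

theorem reflTransGen_iff_exists_path :
    ReflTransGen r x y ↔
      ∃ (k : ℕ) (u : ℕ → α), u 0 = x ∧ u k = y ∧ ∀ i < k, r (u i) (u (i + 1)) := by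
  constructor
  · intro h
    induction h with
    | refl => exact ⟨0, fun _ => x, rfl, rfl, by omega⟩
    | @tail z w _ hzw ih =>
      obtain ⟨k, u, hu0, huk, hu⟩ := ih
      refine ⟨k + 1, Function.update u (k + 1) w, ?_, by simp, fun i hi => ?_⟩
      · rwa [Function.update_of_ne (by omega)]
      · rw [Function.update_of_ne (by omega)]
        rcases Nat.lt_succ_iff_lt_or_eq.1 hi with hi | rfl
        · rw [Function.update_of_ne (by omega)]
          exact hu i hi
        · rwa [Function.update_self, huk]
  · rintro ⟨k, u, rfl, rfl, hu⟩
    induction k with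
    | zero => exact .refl
    | succ k ih => exact (ih fun i hi => hu i (by omega)).tail (hu k (by omega))

theorem exists_reflTransGen_forall_reflTransGen_symm [Finite α] (r : α → α → Prop) (x : α) :
    ∃ y, ReflTransGen r x y ∧ ∀ z, ReflTransGen r y z → ReflTransGen r z y := by
  obtain ⟨y, hxy, hmin⟩ := Set.toFinite {y | ReflTransGen r x y}
    |>.exists_minimalFor (fun y => {z | ReflTransGen r y z}) _ ⟨x, .refl⟩
  exact ⟨y, hxy, fun z hyz =>
    hmin (hxy.trans hyz) (fun w hzw => hyz.trans hzw) (ReflTransGen.refl : ReflTransGen r y y)⟩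

end Relation

namespace ENat

theorem sSup_image_natCast_lt_top {s : Set ℕ} : sSup ((↑) '' s : Set ℕ∞) < ⊤ ↔ BddAbove s := by
  rw [sSup_image, iSup_subtype', iSup_natCast_lt_top, Subtype.range_coe]

end ENat

theorem ENNReal.sum_mul_add_mul_le_one {ι : Type*} [Fintype ι] [DecidableEq ι] {p x : ι → ℝ≥0∞}
    (hp : ∑ i, p i = 1) (hx : ∀ i, x i ≤ 1) {i₀ : ι} {w : ℝ≥0∞} (h : x i₀ + w ≤ 1) :
    ∑ i, p i * x i + p i₀ * w ≤ 1 :=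
  calc ∑ i, p i * x i + p i₀ * w = ∑ i, p i * (x i + if i = i₀ then w else 0) := by
        simp [mul_add, Finset.sum_add_distrib]
    _ ≤ ∑ i, p i * 1 := by
        gcongr with i
        split_ifs with hi
        · exact hi ▸ h
        · simpa using hx i
    _ = 1 := by simpa using hp

namespace MarkovChain

variable {S AP : Type} (P : S → S → ℝ≥0∞) (L : S → Set AP) (a : AP) (n : ℕ)

abbrev Reach : S → S → Prop := Relation.ReflTransGen fun s t => 0 < P s t

noncomputable def pathWeight (u : ℕ → S) (m : ℕ) : ℝ≥0∞ :=
  ∏ k ∈ Finset.range m, P (u k) (u (k + 1))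

open scoped Classical in
noncomputable def runStep (c : ℕ) (t : S) : ℕ := if a ∈ L t then 0 else c + 1

variable {P L a n}

theorem pathWeight_succ (u : ℕ → S) (m : ℕ) :
    pathWeight P u (m + 1) = P (u 0) (u 1) * pathWeight P (fun i => u (i + 1)) m := by
  rw [pathWeight, Finset.prod_range_succ', mul_comm]
  rfl

theorem pathWeight_pos {u : ℕ → S} {m : ℕ} (hu : ∀ i < m, 0 < P (u i) (u (i + 1))) :
    0 < pathWeight P u m :=
  pos_iff_ne_zero.2 <| Finset.prod_ne_zero_iff.2 fun i hi => (hu i (Finset.mem_range.1 hi)).ne'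

section RunLength

variable (L a) in
noncomputable def runLength (π : ℕ → S) : ℕ → ℕ
  | 0 => runStep L a 0 (π 0)
  | j + 1 => runStep L a (runLength π j) (π (j + 1))

theorem runLength_congr {π u : ℕ → S} {p : ℕ} (h : ∀ k ≤ p, π k = u k) :
    runLength L a π p = runLength L a u p := by
  induction p with
  | zero => simp [runLength, h 0 le_rfl]
  | succ p ih =>
    rw [runLength, runLength, ih fun k hk => h k (by omega), h (p + 1) le_rfl]

theorem le_and_notMem_of_lt_runLength (π : ℕ → S) :
    ∀ {j i : ℕ}, i < runLength L a π j → i ≤ j ∧ a ∉ L (π (j - i))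
  | 0, i, hi => by
    unfold runLength runStep at hi
    split_ifs at hi with ha
    · omega
    · exact ⟨by omega, by simpa [show i = 0 by omega] using ha⟩
  | j + 1, i, hi => by
    unfold runLength runStep at hi
    split_ifs at hi with ha
    · omega
    · rcases i with _ | i
      · exact ⟨by omega, ha⟩
      · obtain ⟨hij, hπ⟩ := le_and_notMem_of_lt_runLength π (j := j) (i := i) (by omega)
        exact ⟨by omega, by simpa using hπ⟩

theorem runLength_le {π : ℕ → S} (hπ : ∀ i, ∃ j, i ≤ j ∧ j ≤ i + n ∧ a ∈ L (π j)) (j : ℕ) :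
    runLength L a π j ≤ n := by
  by_contra! hlt
  obtain ⟨hnj, -⟩ := le_and_notMem_of_lt_runLength π hlt
  obtain ⟨l, hl, hln, hla⟩ := hπ (j - n)
  have hfree := (le_and_notMem_of_lt_runLength (L := L) (a := a) π (j := j) (i := j - l)
    (by omega)).2
  rw [show j - (j - l) = l by omega] at hfree
  exact hfree hla

end RunLength

variable (P L a) in
def freeRunLengths (B : Set S) : Set ℕ :=
  {m | ∃ u : ℕ → S, (∀ i ≤ m, u i ∈ B ∧ a ∉ L (u i)) ∧ ∀ i < m, 0 < P (u i) (u (i + 1))}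

theorem exists_mem_of_mem_upperBounds_freeRunLengths {B : Set S} {N : ℕ}
    (hN : N ∈ upperBounds (freeRunLengths P L a B)) {π : ℕ → S}
    (hπ : ∀ j, 0 < P (π j) (π (j + 1))) {i : ℕ} (hB : ∀ j ≥ i, π j ∈ B) :
    ∃ j, i ≤ j ∧ j ≤ i + (N + 1) ∧ a ∈ L (π j) := by
  by_contra! h
  have : N + 1 ≤ N := hN ⟨fun x => π (i + x),
    fun x hx => ⟨hB _ (by omega), h _ (by omega) (by omega)⟩, fun x _ => hπ _⟩
  omega

def pathCylinder (u : ℕ → S) (p : ℕ) : Set (ℕ → S) := {π | ∀ k ≤ p, π k = u k}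

theorem pathCylinder_inter_subset_iUnion [DecidableEq S] (u : ℕ → S) (p : ℕ) (A : Set (ℕ → S)) :
    pathCylinder u p ∩ A ⊆ ⋃ t, pathCylinder (Function.update u (p + 1) t) (p + 1) ∩ A := by
  rintro π ⟨hπ, hA⟩
  refine Set.mem_iUnion.2 ⟨π (p + 1), fun k hk => ?_, hA⟩
  rcases Nat.lt_succ_iff_lt_or_eq.1 (Nat.lt_succ_of_le hk) with hk | rfl
  · rw [Function.update_of_ne (by omega)]
    exact hπ k (by omega)
  · rw [Function.update_self]

theorem pathCylinder_inter_runLength_le_eq_empty {u : ℕ → S} {p : ℕ}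
    (h : n < runLength L a u p) :
    pathCylinder u p ∩ {π | ∀ j, runLength L a π j ≤ n} = ∅ :=
  Set.eq_empty_of_forall_notMem fun _ ⟨hπ, hle⟩ => (hle p).not_gt (runLength_congr hπ ▸ h)

section Survival

variable [Fintype S]

variable (P L a n) in
/-- `survival m s c` is the probability that, started in `s` after a run of `c` consecutive
non-`a` states, the chain sees no run of more than `n` non-`a` states in its next `m` steps. -/
noncomputable def survival : ℕ → S → ℕ → ℝ≥0∞
  | 0, _, c => if c ≤ n then 1 else 0
  | m + 1, s, c => if c ≤ n then ∑ t, P s t * survival m t (runStep L a c t) else 0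

theorem le_one_of_sum_eq_one (hP : ∀ s, ∑ t, P s t = 1) (s t : S) : P s t ≤ 1 :=
  hP s ▸ Finset.single_le_sum (fun _ _ => zero_le) (Finset.mem_univ t)

theorem survival_eq_zero {c : ℕ} (hc : n < c) (m : ℕ) (s : S) : survival P L a n m s c = 0 := by
  cases m <;> rw [survival, if_neg hc.not_ge]

theorem survival_le_one (hP : ∀ s, ∑ t, P s t = 1) (m : ℕ) (s : S) (c : ℕ) :
    survival P L a n m s c ≤ 1 := by
  induction m generalizing s c with
  | zero => unfold survival; split_ifs <;> simp
  | succ m ih =>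
    unfold survival
    split_ifs
    · calc ∑ t, P s t * survival P L a n m t (runStep L a c t) ≤ ∑ t, P s t * 1 := by
            gcongr; exact ih _ _
        _ = 1 := by simpa using hP s
    · exact zero_le

theorem survival_succ_le (hP : ∀ s, ∑ t, P s t = 1) (m : ℕ) (s : S) (c : ℕ) :
    survival P L a n (m + 1) s c ≤ survival P L a n m s c := by
  induction m generalizing s c with
  | zero =>
    rw [survival, survival]
    split_ifs with hc
    · simpa [survival, hc] using survival_le_one (L := L) (a := a) (n := n) hP 1 s c
    · rfl
  | succ m ih =>
    rw [survival, survival]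
    split_ifs
    · gcongr; exact ih _ _
    · rfl

theorem survival_antitone (hP : ∀ s, ∑ t, P s t = 1) (s : S) (c : ℕ) :
    Antitone fun m => survival P L a n m s c :=
  antitone_nat_of_succ_le fun m => survival_succ_le hP m s c

theorem survival_succ_add_le_one [DecidableEq S] (hP : ∀ s, ∑ t, P s t = 1) {m c : ℕ} {s t : S}
    {w : ℝ≥0∞} (h : survival P L a n m t (runStep L a c t) + w ≤ 1) :
    survival P L a n (m + 1) s c + P s t * w ≤ 1 := by
  rw [survival]
  split_ifs
  · exact ENNReal.sum_mul_add_mul_le_one (hP s) (fun _ => survival_le_one hP _ _ _) h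
  · rw [zero_add, ← mul_one 1]
    exact mul_le_mul' (le_one_of_sum_eq_one hP s t) (le_of_add_le_right h)

-- The chain is killed along `u`, so the weight of `u` is missing from the survival probability.
theorem survival_add_pathWeight_le_one [DecidableEq S] (hP : ∀ s, ∑ t, P s t = 1) :
    ∀ (d c : ℕ) (u : ℕ → S), n < c + d → (∀ i < d, a ∉ L (u (i + 1))) →
      survival P L a n d (u 0) c + pathWeight P u d ≤ 1
  | 0, c, u, hc, _ => by
    simp [survival_eq_zero (m := 0) (s := u 0) (by simpa using hc), pathWeight]
  | d + 1, c, u, hc, hu => by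
    rw [pathWeight_succ]
    refine survival_succ_add_le_one hP ?_
    rw [runStep, if_neg (hu 0 d.succ_pos)]
    exact survival_add_pathWeight_le_one hP d (c + 1) (fun i => u (i + 1)) (by omega)
      fun i hi => hu (i + 1) (by omega)

theorem exists_survival_add_le_one_of_reach [DecidableEq S] (hP : ∀ s, ∑ t, P s t = 1)
    {s x : S} (hsx : Reach P s x)
    (hx : ∃ r w, 0 < w ∧ ∀ c, survival P L a n r x c + w ≤ 1) :
    ∃ r w, 0 < w ∧ ∀ c, survival P L a n r s c + w ≤ 1 := by
  induction hsx using Relation.ReflTransGen.head_induction_on with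
  | refl => exact hx
  | head hst _ ih =>
    obtain ⟨r, w, hw, h⟩ := ih
    exact ⟨r + 1, _, ENNReal.mul_pos hst.ne' hw.ne', fun c => survival_succ_add_le_one hP (h _)⟩

theorem exists_uniform_survival_add_le_one (hP : ∀ s, ∑ t, P s t = 1) {R : Set S}
    (h : ∀ s ∈ R, ∃ r w, 0 < w ∧ ∀ c, survival P L a n r s c + w ≤ 1) :
    ∃ r w, 0 < w ∧ ∀ s ∈ R, ∀ c, survival P L a n r s c + w ≤ 1 := by
  classical
  choose! r w hw hr using h
  refine ⟨Finset.univ.sup r, R.toFinset.inf w,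
    (Finset.lt_inf_iff ENNReal.zero_lt_top).2 fun s hs => hw s (Set.mem_toFinset.1 hs),
    fun s hs c => ?_⟩
  calc survival P L a n (Finset.univ.sup r) s c + R.toFinset.inf w
      ≤ survival P L a n (r s) s c + w s :=
        add_le_add (survival_antitone hP s c (Finset.le_sup (Finset.mem_univ s)))
          (Finset.inf_le (Set.mem_toFinset.2 hs))
    _ ≤ 1 := hr s hs c

theorem survival_add_le_mul {R : Set S} (hR : ∀ s ∈ R, ∀ t, 0 < P s t → t ∈ R) {m : ℕ}
    {K : ℝ≥0∞} (hK : ∀ t ∈ R, ∀ c, survival P L a n m t c ≤ K) :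
    ∀ (j : ℕ) (s : S), s ∈ R → ∀ c, survival P L a n (j + m) s c ≤ survival P L a n j s c * K
  | 0, s, hs, c => by
    rcases le_or_gt c n with hc | hc
    · simpa [survival, hc] using hK s hs c
    · simp [survival_eq_zero hc]
  | j + 1, s, hs, c => by
    rw [Nat.succ_add, survival, survival]
    split_ifs
    · rw [Finset.sum_mul]
      refine Finset.sum_le_sum fun t _ => ?_
      rcases (zero_le : 0 ≤ P s t).eq_or_lt with hst | hst
      · simp [← hst]
      · rw [mul_assoc]
        gcongr
        exact survival_add_le_mul hR hK j t (hR s hs t hst) _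
    · simp

theorem survival_mul_le_pow {R : Set S} (hR : ∀ s ∈ R, ∀ t, 0 < P s t → t ∈ R) {r : ℕ}
    {q : ℝ≥0∞} (hq : ∀ s ∈ R, ∀ c, survival P L a n r s c ≤ q) :
    ∀ (k : ℕ) (s : S), s ∈ R → ∀ c, survival P L a n (k * r) s c ≤ q ^ k
  | 0, s, _, c => by rw [zero_mul]; unfold survival; split_ifs <;> simp
  | k + 1, s, hs, c =>
    calc survival P L a n ((k + 1) * r) s c = survival P L a n (r + k * r) s c := by ring_nf
      _ ≤ survival P L a n r s c * q ^ k :=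
        survival_add_le_mul hR (survival_mul_le_pow hR hq k) r s hs c
      _ ≤ q ^ (k + 1) := by rw [pow_succ']; gcongr; exact hq s hs c

end Survival

variable [MeasurableSpace S]

def IsPathMeasure [DecidableEq S] (P : S → S → ℝ≥0∞) (s₀ : S) (μ : Measure (ℕ → S)) : Prop :=
  ∀ (p : ℕ) (u : ℕ → S), μ (pathCylinder u p) = (if u 0 = s₀ then 1 else 0) * pathWeight P u p

variable [DecidableEq S] {s₀ : S} {μ : Measure (ℕ → S)}

theorem IsPathMeasure.measure_pathCylinder_update (hμ : IsPathMeasure P s₀ μ) (u : ℕ → S)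
    (p : ℕ) (t : S) :
    μ (pathCylinder (Function.update u (p + 1) t) (p + 1)) = μ (pathCylinder u p) * P (u p) t := by
  have hu : ∀ k ≤ p, Function.update u (p + 1) t k = u k := fun k hk =>
    Function.update_of_ne (by omega) _ _
  rw [hμ, hμ, pathWeight, pathWeight, Finset.prod_range_succ, hu 0 (zero_le), hu p le_rfl,
    Function.update_self, mul_assoc]
  congr 2
  refine Finset.prod_congr rfl fun k hk => ?_
  rw [Finset.mem_range] at hk
  rw [hu k hk.le, hu (k + 1) hk]

theorem IsPathMeasure.ae_start [Countable S] (hμ : IsPathMeasure P s₀ μ) :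
    ∀ᵐ π ∂μ, π 0 = s₀ := by
  have hsub : {π | ¬ π 0 = s₀} ⊆ ⋃ s : {s // s ≠ s₀}, pathCylinder (fun _ => s.1) 0 :=
    fun π hπ => Set.mem_iUnion.2 ⟨⟨π 0, hπ⟩, fun k hk => by rw [Nat.le_zero.1 hk]⟩
  exact measure_mono_null hsub (measure_iUnion_null fun s => by rw [hμ]; simp [s.2])

theorem IsPathMeasure.measure_pathCylinder_inter_zero_step [Countable S]
    (hμ : IsPathMeasure P s₀ μ) :
    ∀ (j p : ℕ) (u : ℕ → S),
      μ (pathCylinder u p ∩ {π | P (π (p + j)) (π (p + j + 1)) = 0}) = 0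
  | 0, p, u => by
    refine measure_mono_null (pathCylinder_inter_subset_iUnion u p _)
      (measure_iUnion_null fun t => ?_)
    by_cases ht : P (u p) t = 0
    · exact measure_mono_null Set.inter_subset_left
        (by rw [hμ.measure_pathCylinder_update, ht, mul_zero])
    · refine measure_mono_null (fun π ⟨hπ, hzero⟩ => ht ?_) measure_empty
      have hp := hπ p (by omega)
      have hp1 := hπ (p + 1) le_rfl
      simp only [Function.update_self, Function.update_of_ne (show p ≠ p + 1 by omega)] at hp hp1
      simpa [hp, hp1] using hzero
  | j + 1, p, u => by
    refine measure_mono_null (pathCylinder_inter_subset_iUnion u p _)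
      (measure_iUnion_null fun t => ?_)
    rw [show p + (j + 1) = p + 1 + j by omega]
    exact hμ.measure_pathCylinder_inter_zero_step j (p + 1) _

theorem IsPathMeasure.ae_step_pos [Countable S] (hμ : IsPathMeasure P s₀ μ) :
    ∀ᵐ π ∂μ, ∀ i, 0 < P (π i) (π (i + 1)) := by
  refine ae_all_iff.2 fun i => measure_mono_null (fun π hπ => ?_)
    (measure_iUnion_null fun s => hμ.measure_pathCylinder_inter_zero_step i 0 fun _ => s)
  refine Set.mem_iUnion.2 ⟨π 0, fun k hk => by rw [Nat.le_zero.1 hk], ?_⟩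
  simpa using hπ

/-- Splitting a cylinder according to the next state mirrors the recursion defining
`survival`. -/
theorem IsPathMeasure.measure_pathCylinder_inter_le_survival [Fintype S]
    (hμ : IsPathMeasure P s₀ μ) (m p : ℕ) (u : ℕ → S) :
    μ (pathCylinder u p ∩ {π | ∀ j, runLength L a π j ≤ n}) ≤
      μ (pathCylinder u p) * survival P L a n m (u p) (runLength L a u p) := by
  induction m generalizing p u with
  | zero =>
    by_cases hc : runLength L a u p ≤ n
    · simpa [survival, hc] using measure_mono Set.inter_subset_left
    · simp [pathCylinder_inter_runLength_le_eq_empty (not_le.1 hc)]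
  | succ m ih =>
    by_cases hc : runLength L a u p ≤ n
    swap
    · simp [pathCylinder_inter_runLength_le_eq_empty (not_le.1 hc)]
    set A := {π : ℕ → S | ∀ j, runLength L a π j ≤ n}
    set u' := fun t => Function.update u (p + 1) t
    have hu' : ∀ t, runLength L a (u' t) (p + 1) = runStep L a (runLength L a u p) t := by
      intro t
      rw [runLength, runLength_congr (u := u) fun k hk => Function.update_of_ne (by omega) _ _]
      simp [u']
    calc μ (pathCylinder u p ∩ A) ≤ μ (⋃ t, pathCylinder (u' t) (p + 1) ∩ A) :=
          measure_mono (pathCylinder_inter_subset_iUnion u p A)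
      _ ≤ ∑ t, μ (pathCylinder (u' t) (p + 1) ∩ A) := measure_iUnion_fintype_le _ _
      _ ≤ ∑ t, μ (pathCylinder (u' t) (p + 1)) *
            survival P L a n m t (runStep L a (runLength L a u p) t) := by
          refine Finset.sum_le_sum fun t _ => ?_
          simpa [hu', u'] using ih (p + 1) (u' t)
      _ = μ (pathCylinder u p) * survival P L a n (m + 1) (u p) (runLength L a u p) := by
          simp_rw [survival, if_pos hc, Finset.mul_sum, u', hμ.measure_pathCylinder_update,
            mul_assoc]

theorem IsPathMeasure.measure_runLength_le_le_survival [Fintype S] (hμ : IsPathMeasure P s₀ μ)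
    (m : ℕ) :
    μ {π | ∀ j, runLength L a π j ≤ n} ≤ survival P L a n m s₀ (runStep L a 0 s₀) :=
  calc μ {π | ∀ j, runLength L a π j ≤ n}
      ≤ μ (pathCylinder (fun _ => s₀) 0 ∩ {π | ∀ j, runLength L a π j ≤ n}) := by
        refine measure_mono_ae ?_
        filter_upwards [hμ.ae_start] with π hπ hA
        exact ⟨fun k hk => by rw [Nat.le_zero.1 hk, hπ], hA⟩
    _ ≤ μ (pathCylinder (fun _ => s₀) 0) * survival P L a n m s₀ (runStep L a 0 s₀) :=
        hμ.measure_pathCylinder_inter_le_survival m 0 _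
    _ = survival P L a n m s₀ (runStep L a 0 s₀) := by rw [hμ]; simp [pathWeight]

theorem IsPathMeasure.measure_forall_window_eq_zero [Fintype S] (hμ : IsPathMeasure P s₀ μ)
    (hP : ∀ s, ∑ t, P s t = 1)
    (hfree : ∀ s, Reach P s₀ s → ∃ u : ℕ → S, Reach P s (u 0) ∧
      ∀ i < n + 1, a ∉ L (u (i + 1)) ∧ 0 < P (u i) (u (i + 1))) :
    μ {π | ∀ i, ∃ j, i ≤ j ∧ j ≤ i + n ∧ a ∈ L (π j)} = 0 := by
  obtain ⟨r, w, hw, hgap⟩ := exists_uniform_survival_add_le_one hP (R := {s | Reach P s₀ s})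
    fun s hs => by
      obtain ⟨u, hsu, hu⟩ := hfree s hs
      exact exists_survival_add_le_one_of_reach hP hsu ⟨n + 1, pathWeight P u (n + 1),
        pathWeight_pos fun i hi => (hu i hi).2,
        fun c => survival_add_pathWeight_le_one (n := n) hP (n + 1) c u (by omega)
          fun i hi => (hu i hi).1⟩
  have hw_ne_top : w ≠ ⊤ :=
    ne_top_of_le_ne_top ENNReal.one_ne_top (le_of_add_le_right (hgap s₀ .refl 0))
  have hdecay : ∀ k, μ {π | ∀ i, ∃ j, i ≤ j ∧ j ≤ i + n ∧ a ∈ L (π j)} ≤ (1 - w) ^ k := fun k =>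
    calc μ {π | ∀ i, ∃ j, i ≤ j ∧ j ≤ i + n ∧ a ∈ L (π j)}
        ≤ μ {π | ∀ j, runLength L a π j ≤ n} := measure_mono fun π hπ => runLength_le hπ
      _ ≤ survival P L a n (k * r) s₀ (runStep L a 0 s₀) :=
          hμ.measure_runLength_le_le_survival _
      _ ≤ (1 - w) ^ k :=
          survival_mul_le_pow (fun s hs t hst => hs.tail hst)
            (fun s hs c => ENNReal.le_sub_of_add_le_right hw_ne_top (hgap s hs c)) k s₀ .refl _
  exact le_antisymm (ge_of_tendsto' (ENNReal.tendsto_pow_atTop_nhds_zero_of_lt_one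
    (ENNReal.sub_lt_self ENNReal.one_ne_top one_ne_zero hw.ne')) hdecay) zero_le

theorem IsPathMeasure.measure_forall_window_pos [Countable S] (hμ : IsPathMeasure P s₀ μ)
    {B : Set S} (hB : ∀ s ∈ B, ∀ t, 0 < P s t → t ∈ B) {k N : ℕ} {u : ℕ → S} (hu0 : u 0 = s₀)
    (huk : u k ∈ B) (hu : ∀ i < k, 0 < P (u i) (u (i + 1)))
    (hN : N ∈ upperBounds (freeRunLengths P L a B)) :
    0 < μ {π | ∀ i, ∃ j, i ≤ j ∧ j ≤ i + (k + N + 1) ∧ a ∈ L (π j)} := by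
  have hpos : 0 < μ (pathCylinder u k) := by
    rw [hμ, if_pos hu0, one_mul]
    exact pathWeight_pos hu
  refine hpos.trans_le (measure_mono_ae ?_)
  filter_upwards [hμ.ae_step_pos] with π hπ hcyl i
  have hstay : ∀ j ≥ k, π j ∈ B :=
    Nat.le_induction (hcyl k le_rfl ▸ huk) fun j _ hj => hB _ hj _ (hπ j)
  obtain ⟨j, hij, hjN, hja⟩ := exists_mem_of_mem_upperBounds_freeRunLengths hN hπ
    (i := max i k) fun j hj => hstay j (le_of_max_le_right hj)
  exact ⟨j, by omega, by omega, hja⟩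

end MarkovChain

open MarkovChain

theorem parametric_buchi_emptiness_general
    {AP S : Type} [Fintype S] [DecidableEq S] [MeasurableSpace S]
    (P : S → S → ℝ≥0∞) (hP : ∀ s, ∑ t, P s t = 1)
    (s₀ : S) (L : S → Set AP) (a : AP)
    (μ : Measure (ℕ → S))
    (hcyl : ∀ (n : ℕ) (u : ℕ → S),
      μ {π | ∀ k ≤ n, π k = u k} =
        (if u 0 = s₀ then 1 else 0) * ∏ k ∈ Finset.range n, P (u k) (u (k + 1))) :
    {n : ℕ | 0 < μ {π | ∀ i : ℕ, ∃ j, i ≤ j ∧ j ≤ i + n ∧ a ∈ L (π j)}}.Nonempty ↔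
      ∃ B : Set S,
        -- B is a BSCC
        B.Nonempty ∧
        (∀ s ∈ B, ∀ t ∈ B, ∃ (k : ℕ) (u : ℕ → S),
          u 0 = s ∧ u k = t ∧ ∀ i < k, 0 < P (u i) (u (i + 1))) ∧
        (∀ s ∈ B, ∀ t, 0 < P s t → t ∈ B) ∧
        -- B is reachable from s₀
        (∃ t ∈ B, ∃ (k : ℕ) (u : ℕ → S),
          u 0 = s₀ ∧ u k = t ∧ ∀ i < k, 0 < P (u i) (u (i + 1))) ∧
        -- n_{a,B} < ∞
        sSup ((fun m : ℕ => (m : ℕ∞)) ''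
          {m : ℕ | ∃ u : ℕ → S,
            (∀ i ≤ m, u i ∈ B ∧ a ∉ L (u i)) ∧
              ∀ i < m, 0 < P (u i) (u (i + 1))}) < ⊤ := by
  have hμ : IsPathMeasure P s₀ μ := hcyl
  simp only [ENat.sSup_image_natCast_lt_top]
  constructor
  · rintro ⟨n, hn⟩
    by_contra hB
    refine hn.ne' (hμ.measure_forall_window_eq_zero hP fun s hs => ?_)
    obtain ⟨t, hst, hbot⟩ := Relation.exists_reflTransGen_forall_reflTransGen_symm _ s
    have hunb : ¬ BddAbove (freeRunLengths P L a {x | Reach P t x}) := fun hbdd =>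
      hB ⟨{x | Reach P t x}, ⟨t, .refl⟩,
        fun x hx y hy => Relation.reflTransGen_iff_exists_path.1 ((hbot x hx).trans hy),
        fun x hx y hxy => hx.tail hxy,
        ⟨t, .refl, Relation.reflTransGen_iff_exists_path.1 (hs.trans hst)⟩, hbdd⟩
    obtain ⟨m, ⟨u, hu, hupos⟩, hm⟩ := not_bddAbove_iff.1 hunb n
    exact ⟨u, hst.trans (hu 0 (Nat.zero_le _)).1,
      fun i hi => ⟨(hu (i + 1) (by omega)).2, hupos i (by omega)⟩⟩
  · rintro ⟨B, -, -, hB, ⟨t, htB, k, u, hu0, huk, hu⟩, N, hN⟩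
    exact ⟨k + N + 1, hμ.measure_forall_window_pos hB hu0 (huk ▸ htB) hu hN⟩

/-- Emptiness for parametric Büchi: for a finite Markov chain `M = (S,P,s₀,L)` and `a ∈ AP`,
`V_{>0}(□◇_{≤x} a) ≠ ∅` iff there is a bottom strongly connected component `B` of `M`,
reachable from `s₀`, with `n_{a,B} < ∞` (the supremum of lengths of `a`-avoiding path
fragments inside `B`, taken in `ℕ ∪ {∞}`, is finite). -/
theorem parametric_buchi_emptiness
    {AP S : Type} [Fintype S] [DecidableEq S] [MeasurableSpace S]
    (P : S → S → ℝ≥0∞) (hP : ∀ s, ∑ t, P s t = 1)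
    (s₀ : S) (L : S → Set AP) (a : AP)
    (μ : Measure (ℕ → S)) (hprob : IsProbabilityMeasure μ)
    (hcyl : ∀ (n : ℕ) (u : ℕ → S),
      μ {π | ∀ k ≤ n, π k = u k} =
        (if u 0 = s₀ then 1 else 0) * ∏ k ∈ Finset.range n, P (u k) (u (k + 1))) :
    {n : ℕ | 0 < μ {π | ∀ i : ℕ, ∃ j, i ≤ j ∧ j ≤ i + n ∧ a ∈ L (π j)}}.Nonempty ↔
      ∃ B : Set S,
        -- B is a BSCC
        B.Nonempty ∧
        (∀ s ∈ B, ∀ t ∈ B, ∃ (k : ℕ) (u : ℕ → S),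
          u 0 = s ∧ u k = t ∧ ∀ i < k, 0 < P (u i) (u (i + 1))) ∧
        (∀ s ∈ B, ∀ t, 0 < P s t → t ∈ B) ∧
        -- B is reachable from s₀
        (∃ t ∈ B, ∃ (k : ℕ) (u : ℕ → S),
          u 0 = s₀ ∧ u k = t ∧ ∀ i < k, 0 < P (u i) (u (i + 1))) ∧
        -- n_{a,B} < ∞
        sSup ((fun m : ℕ => (m : ℕ∞)) ''
          {m : ℕ | ∃ u : ℕ → S,
            (∀ i ≤ m, u i ∈ B ∧ a ∉ L (u i)) ∧
              ∀ i < m, 0 < P (u i) (u (i + 1))}) < ⊤ :=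
  parametric_buchi_emptiness_general P hP s₀ L a μ hcyl
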